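/- arXiv:2312.00998 — 4 statements merged into one kernel-verified Lean document; each statement's English description precedes it below -/
import Mathlib

section
/- Suppose E : [1,∞) → [0,∞) satisfies: (i) E(R) ≤ C R^n for all R > 1, and (ii) for all R large and all real L with 10 < L < R, E(R) ≤ C L^n R^{-2} E(4R) + C L^{-2(p+1)/(p-1)} R^n, where C > 0, n ≥ 3 and p > 1 are fixed. Define α_0 = 0, α_{k+1} = (α_k + 2)·2(p+1)/(n(p-1)+2(p+1)). Then for every k there exists a constant C_k such that E(R) ≤ C_k R^{n - α_k} for all R > 1. -/
/-!
Choosing `L = R ^ θ` with `θ = (2 + α)(p - 1) / (n(p - 1) + 2(p + 1))` balances the two terms of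
the recursive inequality: if `E ≲ R ^ (n - α)`, both terms become `≲ R ^ (n - α')` with
`α' = (α + 2) · 2(p + 1) / (n(p - 1) + 2(p + 1))`. The choice is admissible for large `R`
(`10 < L < R`) because `0 < θ < 1`, which holds as long as `α ≤ 2(p + 1)/(p - 1)`, an invariant of
the recursion when `n ≥ 2`. On a bounded range `1 < R ≤ R₁` the a priori bound `E ≤ C R ^ n`
suffices.
-/

open Real Filter

section Exponents

variable {n p α : ℝ}

theorem iterate_exponent_mem_Icc (hn : 2 ≤ n) (hp : 1 < p) (hα0 : 0 ≤ α)
    (hαq : α ≤ 2 * (p + 1) / (p - 1)) :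
    (α + 2) * (2 * (p + 1) / (n * (p - 1) + 2 * (p + 1))) ∈ Set.Icc 0 (2 * (p + 1) / (p - 1)) := by
  have hp1 : 0 < p - 1 := by linarith
  have hD : 0 < n * (p - 1) + 2 * (p + 1) := by nlinarith
  refine ⟨by positivity, ?_⟩
  rw [le_div_iff₀ hp1] at hαq
  rw [mul_div_assoc', div_le_div_iff₀ hD hp1]
  nlinarith [mul_le_mul_of_nonneg_right hn hp1.le]

theorem scale_exponent_mem_Ioo (hn : 2 < n) (hp : 1 < p) (hα0 : -2 < α)
    (hαq : α ≤ 2 * (p + 1) / (p - 1)) :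
    (2 + α) * (p - 1) / (n * (p - 1) + 2 * (p + 1)) ∈ Set.Ioo 0 1 := by
  have hp1 : 0 < p - 1 := by linarith
  have hD : 0 < n * (p - 1) + 2 * (p + 1) := by nlinarith
  rw [le_div_iff₀ hp1] at hαq
  refine ⟨div_pos (mul_pos (by linarith) hp1) hD, (div_lt_one hD).2 ?_⟩
  nlinarith [mul_lt_mul_of_pos_right hn hp1]

end Exponents

theorem eventually_lt_rpow_lt_self {θ : ℝ} (hθ0 : 0 < θ) (hθ1 : θ < 1) (a : ℝ) :
    ∀ᶠ R in atTop, a < R ^ θ ∧ R ^ θ < R :=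
  ((tendsto_rpow_atTop hθ0).eventually_gt_atTop a).and <|
    (eventually_gt_atTop 1).mono fun R hR => by
      simpa using rpow_lt_rpow_of_exponent_lt hR hθ1

theorem eventually_le_of_energy_rec {E : ℝ → ℝ} {C K n p α : ℝ} (hn : 2 < n) (hp : 1 < p)
    (hC : 0 ≤ C) (hα0 : -2 < α) (hαq : α ≤ 2 * (p + 1) / (p - 1))
    (hrec : ∀ᶠ R in atTop, ∀ L : ℝ, 10 < L → L < R →
      E R ≤ C * L ^ n * R ^ (-2 : ℝ) * E (4 * R) + C * L ^ (-(2 * (p + 1) / (p - 1))) * R ^ n)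
    (hK : ∀ R : ℝ, 1 < R → E R ≤ K * R ^ (n - α)) :
    ∀ᶠ R in atTop, E R ≤ (C * K * 4 ^ (n - α) + C) *
      R ^ (n - (α + 2) * (2 * (p + 1) / (n * (p - 1) + 2 * (p + 1)))) := by
  obtain ⟨hθ0, hθ1⟩ := scale_exponent_mem_Ioo hn hp hα0 hαq
  set θ := (2 + α) * (p - 1) / (n * (p - 1) + 2 * (p + 1))
  set β := (α + 2) * (2 * (p + 1) / (n * (p - 1) + 2 * (p + 1)))
  have hp1 : p - 1 ≠ 0 := by linarith
  have hD : n * (p - 1) + 2 * (p + 1) ≠ 0 := by nlinarith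
  have hexp₁ : θ * n + -2 + (n - α) = n - β := by
    linear_combination (2 + α) * mul_inv_cancel₀ hD
  have hexp₂ : θ * -(2 * (p + 1) / (p - 1)) + n = n - β := by
    linear_combination (-(2 + α) * 2 * (p + 1) / (n * (p - 1) + 2 * (p + 1))) * mul_inv_cancel₀ hp1
  filter_upwards [hrec, eventually_lt_rpow_lt_self hθ0 hθ1 10, eventually_gt_atTop 1]
    with R hrecR ⟨hL10, hLR⟩ hR
  have hR0 : 0 < R := by linarith
  have h₁ : R ^ (θ * n) * R ^ (-2 : ℝ) * R ^ (n - α) = R ^ (n - β) := by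
    rw [← rpow_add hR0, ← rpow_add hR0, hexp₁]
  have h₂ : R ^ (θ * -(2 * (p + 1) / (p - 1))) * R ^ n = R ^ (n - β) := by
    rw [← rpow_add hR0, hexp₂]
  calc E R ≤ C * (R ^ θ) ^ n * R ^ (-2 : ℝ) * E (4 * R)
        + C * (R ^ θ) ^ (-(2 * (p + 1) / (p - 1))) * R ^ n := hrecR _ hL10 hLR
    _ ≤ C * (R ^ θ) ^ n * R ^ (-2 : ℝ) * (K * (4 * R) ^ (n - α))
        + C * (R ^ θ) ^ (-(2 * (p + 1) / (p - 1))) * R ^ n := by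
      gcongr
      exact hK _ (by linarith)
    _ = (C * K * 4 ^ (n - α) + C) * R ^ (n - β) := by
      rw [mul_rpow (by norm_num) hR0.le, ← rpow_mul hR0.le, ← rpow_mul hR0.le]
      linear_combination (C * K * 4 ^ (n - α)) * h₁ + C * h₂

theorem exists_le_mul_rpow_of_eventually {E : ℝ → ℝ} {C A m n : ℝ} (hC : 0 ≤ C) (hmn : m ≤ n)
    (hE : ∀ R : ℝ, 1 < R → E R ≤ C * R ^ n) (hA : ∀ᶠ R in atTop, E R ≤ A * R ^ m) :
    ∃ K, ∀ R : ℝ, 1 < R → E R ≤ K * R ^ m := by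
  obtain ⟨R₁, hR₁⟩ := eventually_atTop.1 hA
  refine ⟨max A (C * R₁ ^ (n - m)), fun R hR => ?_⟩
  have hR0 : 0 < R := by linarith
  rcases le_or_gt R₁ R with hR₁R | hRR₁
  · exact (hR₁ R hR₁R).trans (by gcongr; apply le_max_left)
  · calc E R ≤ C * R ^ n := hE R hR
      _ = C * R ^ (n - m) * R ^ m := by rw [mul_assoc, ← rpow_add hR0, sub_add_cancel]
      _ ≤ C * R₁ ^ (n - m) * R ^ m := by gcongr
      _ ≤ max A (C * R₁ ^ (n - m)) * R ^ m := by gcongr; apply le_max_right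

theorem energy_iteration_general
    (n : ℕ) (hn : 3 ≤ n) (p C : ℝ) (hp : 1 < p) (hC : 0 < C)
    (E : ℝ → ℝ)
    (hE_growth : ∀ R : ℝ, 1 < R → E R ≤ C * R ^ (n : ℝ))
    (hE_rec : ∃ R₀ : ℝ, ∀ R : ℝ, R₀ ≤ R → ∀ L : ℝ, 10 < L → L < R →
      E R ≤ C * L ^ (n : ℝ) * R ^ (-2 : ℝ) * E (4 * R)
            + C * L ^ (-(2 * (p + 1) / (p - 1))) * R ^ (n : ℝ))
    (α : ℕ → ℝ) (hα0 : α 0 = 0)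
    (hαrec : ∀ k, α (k + 1) = (α k + 2) * (2 * (p + 1) / ((n : ℝ) * (p - 1) + 2 * (p + 1)))) :
    ∀ k : ℕ, ∃ Ck : ℝ, ∀ R : ℝ, 1 < R → E R ≤ Ck * R ^ ((n : ℝ) - α k) := by
  have hn' : (2 : ℝ) < n := by exact_mod_cast hn
  have hα_mem : ∀ k, α k ∈ Set.Icc 0 (2 * (p + 1) / (p - 1)) := by
    intro k
    induction k with
    | zero =>
      rw [hα0]
      exact ⟨le_rfl, div_nonneg (by linarith) (by linarith)⟩
    | succ k ih => exact hαrec k ▸ iterate_exponent_mem_Icc hn'.le hp ih.1 ih.2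
  intro k
  induction k with
  | zero => exact ⟨C, by simpa [hα0] using hE_growth⟩
  | succ k ih =>
    obtain ⟨K, hK⟩ := ih
    have hstep := eventually_le_of_energy_rec hn' hp hC.le (by linarith [(hα_mem k).1])
      (hα_mem k).2 (eventually_atTop.2 hE_rec) hK
    rw [← hαrec k] at hstep
    exact exists_le_mul_rpow_of_eventually hC.le (by linarith [(hα_mem (k + 1)).1]) hE_growth hstep

theorem energy_iteration
    (n : ℕ) (hn : 3 ≤ n) (p C : ℝ) (hp : 1 < p) (hC : 0 < C)
    (E : ℝ → ℝ) (hE_nonneg : ∀ R, 1 ≤ R → 0 ≤ E R)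
    (hE_growth : ∀ R : ℝ, 1 < R → E R ≤ C * R ^ (n : ℝ))
    (hE_rec : ∃ R₀ : ℝ, ∀ R : ℝ, R₀ ≤ R → ∀ L : ℝ, 10 < L → L < R →
      E R ≤ C * L ^ (n : ℝ) * R ^ (-2 : ℝ) * E (4 * R)
            + C * L ^ (-(2 * (p + 1) / (p - 1))) * R ^ (n : ℝ))
    (α : ℕ → ℝ) (hα0 : α 0 = 0)
    (hαrec : ∀ k, α (k + 1) = (α k + 2) * (2 * (p + 1) / ((n : ℝ) * (p - 1) + 2 * (p + 1)))) :
    ∀ k : ℕ, ∃ Ck : ℝ, ∀ R : ℝ, 1 < R → E R ≤ Ck * R ^ ((n : ℝ) - α k) :=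
  energy_iteration_general n hn p C hp hC E hE_growth hE_rec α hα0 hαrec
end

section
/- Let f : ℝ → ℝ be continuous and let g : ℝ → ℝ be a bounded C² solution of g'' + f(g) = 0 on ℝ which is monotone nondecreasing. Then the limits g₋ = lim_{t→-∞} g(t) and g₊ = lim_{t→+∞} g(t) exist, lim_{t→±∞} g'(t) = 0, and f(g₋) = f(g₊) = 0. -/
/-!
Being monotone and bounded, `g` has limits `g∓` at `∓∞`. With `F' = f`, the energy `g'² / 2 + F(g)`
is constant, so `g' = √(2 (E - F(g)))` (recall `g' ≥ 0`) converges at both ends as well. A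
derivative which has a limit at an end where the function itself converges must tend to `0`;
applied to `g'`, whose derivative `-f(g)` tends to `-f(g∓)`, this gives `f(g∓) = 0`.
-/

open Filter Topology

section DerivLimit

variable {h : ℝ → ℝ} {a c : ℝ}

theorem eq_zero_of_tendsto_deriv_atTop (hd : Differentiable ℝ h) (ha : Tendsto h atTop (𝓝 a))
    (hc : Tendsto (deriv h) atTop (𝓝 c)) : c = 0 := by
  have h_slope : ∀ t : ℝ, ∃ ξ ∈ Set.Ioo t (t + 1), deriv h ξ = h (t + 1) - h t := fun t => by
    simpa using exists_deriv_eq_slope h (lt_add_one t) hd.continuous.continuousOn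
      hd.differentiableOn
  choose ξ hξ hξ_eq using h_slope
  have hξ_top : Tendsto ξ atTop atTop := tendsto_atTop_mono (fun t => (hξ t).1.le) tendsto_id
  have h_shift : Tendsto (fun t => h (t + 1)) atTop (𝓝 a) :=
    ha.comp (tendsto_atTop_add_const_right _ 1 tendsto_id)
  have h_zero : Tendsto (fun t => deriv h (ξ t)) atTop (𝓝 0) := by
    simpa only [hξ_eq, sub_self] using h_shift.sub ha
  exact tendsto_nhds_unique (hc.comp hξ_top) h_zero

theorem eq_zero_of_tendsto_deriv_atBot (hd : Differentiable ℝ h) (ha : Tendsto h atBot (𝓝 a))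
    (hc : Tendsto (deriv h) atBot (𝓝 c)) : c = 0 := by
  have hd_neg : Differentiable ℝ (fun t => h (-t)) := hd.comp differentiable_neg
  have h_deriv : deriv (fun t => h (-t)) = fun t => -deriv h (-t) :=
    funext (deriv_comp_neg h)
  refine neg_eq_zero.mp <| eq_zero_of_tendsto_deriv_atTop hd_neg
    (ha.comp tendsto_neg_atTop_atBot) ?_
  rw [h_deriv]
  exact (hc.comp tendsto_neg_atTop_atBot).neg

end DerivLimit

section Energy

variable {f g : ℝ → ℝ}

theorem deriv_sq_div_two_add_comp_eq {F : ℝ → ℝ} (hF : ∀ x, HasDerivAt F (f x) x)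
    (hg : Differentiable ℝ g) (hg' : Differentiable ℝ (deriv g))
    (hode : ∀ t, deriv (deriv g) t = -f (g t)) (s t : ℝ) :
    deriv g s ^ 2 / 2 + F (g s) = deriv g t ^ 2 / 2 + F (g t) := by
  have h_energy : ∀ t, HasDerivAt (fun t => deriv g t ^ 2 / 2 + F (g t)) 0 t := fun t => by
    refine ((((hg' t).hasDerivAt.pow 2).div_const 2).add
      ((hF (g t)).comp t (hg t).hasDerivAt)).congr_deriv ?_
    rw [hode]
    ring
  exact is_const_of_deriv_eq_zero (fun t => (h_energy t).differentiableAt)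
    (fun t => (h_energy t).deriv) s t

theorem exists_tendsto_deriv_of_monotone_of_tendsto (hf : Continuous f)
    (hg : Differentiable ℝ g) (hg' : Differentiable ℝ (deriv g))
    (hode : ∀ t, deriv (deriv g) t = -f (g t)) (hmono : Monotone g) {l : Filter ℝ} {b : ℝ}
    (hb : Tendsto g l (𝓝 b)) : ∃ c, Tendsto (deriv g) l (𝓝 c) := by
  set F : ℝ → ℝ := fun x => ∫ y in (0 : ℝ)..x, f y
  have hF : ∀ x, HasDerivAt F (f x) x := fun x => (hf.integral_hasStrictDerivAt 0 x).hasDerivAt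
  have hF_cont : Continuous F := continuous_iff_continuousAt.2 fun x => (hF x).continuousAt
  obtain ⟨E, hE⟩ : ∃ E, ∀ t, deriv g t ^ 2 / 2 + F (g t) = E :=
    ⟨_, fun t => deriv_sq_div_two_add_comp_eq hF hg hg' hode t 0⟩
  have h_sqrt : deriv g = fun t => √(2 * (E - F (g t))) := funext fun t => by
    rw [← hE t, add_sub_cancel_right, mul_div_cancel₀ _ two_ne_zero,
      Real.sqrt_sq hmono.deriv_nonneg]
  rw [h_sqrt]
  exact ⟨_, (((hF_cont.tendsto b).comp hb).const_sub E |>.const_mul 2).sqrt⟩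

end Energy

theorem bounded_monotone_ode_limits
    (f g : ℝ → ℝ) (hf : Continuous f) (hg : ContDiff ℝ 2 g)
    (hode : ∀ t, deriv (deriv g) t + f (g t) = 0)
    (hbdd : ∃ M : ℝ, ∀ t, |g t| ≤ M)
    (hmono : Monotone g) :
    ∃ gm gp : ℝ,
      Tendsto g atBot (nhds gm) ∧ Tendsto g atTop (nhds gp) ∧
      Tendsto (deriv g) atBot (nhds 0) ∧ Tendsto (deriv g) atTop (nhds 0) ∧
      f gm = 0 ∧ f gp = 0 := by
  obtain ⟨M, hM⟩ := hbdd
  have hg₁ : Differentiable ℝ g := hg.differentiable two_ne_zero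
  have hg₂ : Differentiable ℝ (deriv g) :=
    (contDiff_succ_iff_deriv.mp hg).2.2.differentiable one_ne_zero
  have hode' : ∀ t, deriv (deriv g) t = -f (g t) := fun t => eq_neg_of_add_eq_zero_left (hode t)
  have hgm := tendsto_atBot_ciInf hmono ⟨-M, Set.forall_mem_range.2 fun t => (abs_le.1 (hM t)).1⟩
  have hgp := tendsto_atTop_ciSup hmono ⟨M, Set.forall_mem_range.2 fun t => (abs_le.1 (hM t)).2⟩
  obtain ⟨cm, hcm⟩ := exists_tendsto_deriv_of_monotone_of_tendsto hf hg₁ hg₂ hode' hmono hgm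
  obtain ⟨cp, hcp⟩ := exists_tendsto_deriv_of_monotone_of_tendsto hf hg₁ hg₂ hode' hmono hgp
  obtain rfl := eq_zero_of_tendsto_deriv_atBot hg₁ hgm hcm
  obtain rfl := eq_zero_of_tendsto_deriv_atTop hg₁ hgp hcp
  have h_deriv₂ {l : Filter ℝ} {b : ℝ} (hb : Tendsto g l (𝓝 b)) :
      Tendsto (deriv (deriv g)) l (𝓝 (-f b)) :=
    ((hf.tendsto b).comp hb).neg.congr fun t => (hode' t).symm
  exact ⟨_, _, hgm, hgp, hcm, hcp,
    neg_eq_zero.mp (eq_zero_of_tendsto_deriv_atBot hg₂ hcm (h_deriv₂ hgm)),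
    neg_eq_zero.mp (eq_zero_of_tendsto_deriv_atTop hg₂ hcp (h_deriv₂ hgp))⟩
end

section
/- Let f : ℝ → ℝ be continuous with antiderivative F, and let g be a bounded nonconstant C² solution of g'' + f(g) = 0 on ℝ that is strictly increasing, with limits g₋ < g₊ at ∓∞. Set C = F(g₋). Then F(g₊) = F(g₋) and F(s) ≤ C for all s ∈ [g₋, g₊]; i.e. W(s) := C - F(s) is a nonnegative potential on [g₋, g₊] vanishing exactly at the endpoints where g' = 0. -/
/-!
The energy `g'(t)² / 2 + F (g t)` is constant along the solution, say equal to `C`, so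
`F ≤ C` on the range of `g` and hence on its closure, which contains `[g₋, g₊]`.
At either end `g` converges, so by the mean value theorem `g'` tends to `0` along a sequence
escaping to that end; passing to the limit in the energy identity gives `F g₋ = C = F g₊`.
-/

open Filter Topology Set

noncomputable def energy (F g : ℝ → ℝ) (t : ℝ) : ℝ := deriv g t ^ 2 / 2 + F (g t)

section Energy

variable {f F g : ℝ → ℝ}

theorem le_energy (t : ℝ) : F (g t) ≤ energy F g t :=
  le_add_of_nonneg_left (by positivity)

theorem hasDerivAt_energy (hF : ∀ s, HasDerivAt F (f s) s) (hg : ContDiff ℝ 2 g)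
    (hode : ∀ t, deriv (deriv g) t + f (g t) = 0) (t : ℝ) :
    HasDerivAt (energy F g) 0 t := by
  have hg' : HasDerivAt g (deriv g t) t := (hg.differentiable two_ne_zero t).hasDerivAt
  have hg'' : HasDerivAt (deriv g) (deriv (deriv g) t) t :=
    (hg.differentiable_deriv_two t).hasDerivAt
  refine (((hg''.pow 2).div_const 2).add ((hF (g t)).comp t hg')).congr_deriv ?_
  linear_combination deriv g t * hode t

theorem energy_eq_energy_zero (hF : ∀ s, HasDerivAt F (f s) s) (hg : ContDiff ℝ 2 g)
    (hode : ∀ t, deriv (deriv g) t + f (g t) = 0) (t : ℝ) :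
    energy F g t = energy F g 0 :=
  is_const_of_deriv_eq_zero (fun t ↦ (hasDerivAt_energy hF hg hode t).differentiableAt)
    (fun t ↦ (hasDerivAt_energy hF hg hode t).deriv) t 0

theorem energy_eq_of_tendsto {l : Filter ℝ} {a C : ℝ} {c : ℕ → ℝ} (hc : Tendsto c atTop l)
    (hdc : Tendsto (fun n ↦ deriv g (c n)) atTop (𝓝 0)) (hga : Tendsto g l (𝓝 a))
    (hFa : ContinuousAt F a) (hE : ∀ t, energy F g t = C) : C = F a := by
  have hlim : Tendsto (fun n ↦ energy F g (c n)) atTop (𝓝 (0 ^ 2 / 2 + F a)) :=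
    ((hdc.pow 2).div_const 2).add (hFa.tendsto.comp (hga.comp hc))
  simpa [hE] using hlim

end Energy

theorem exists_seq_tendsto_atTop_deriv_tendsto_zero {g : ℝ → ℝ} {a : ℝ}
    (hd : Differentiable ℝ g) (hg : Tendsto g atTop (𝓝 a)) :
    ∃ c : ℕ → ℝ, Tendsto c atTop atTop ∧ Tendsto (fun n ↦ deriv g (c n)) atTop (𝓝 0) := by
  choose c hc hslope using fun n : ℕ ↦
    exists_deriv_eq_slope g (lt_add_one (n : ℝ)) hd.continuous.continuousOn hd.differentiableOn
  have hc_top : Tendsto c atTop atTop :=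
    tendsto_atTop_mono (fun n ↦ (hc n).1.le) tendsto_natCast_atTop_atTop
  have hshift : Tendsto (fun n : ℕ ↦ (n : ℝ) + 1) atTop atTop :=
    tendsto_atTop_add_const_right _ 1 tendsto_natCast_atTop_atTop
  refine ⟨c, hc_top, ?_⟩
  have hdiff := (hg.comp hshift).sub (hg.comp tendsto_natCast_atTop_atTop)
  rw [sub_self] at hdiff
  refine hdiff.congr fun n ↦ ?_
  simp [hslope n]

theorem exists_seq_tendsto_atBot_deriv_tendsto_zero {g : ℝ → ℝ} {a : ℝ}
    (hd : Differentiable ℝ g) (hg : Tendsto g atBot (𝓝 a)) :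
    ∃ c : ℕ → ℝ, Tendsto c atTop atBot ∧ Tendsto (fun n ↦ deriv g (c n)) atTop (𝓝 0) := by
  obtain ⟨c, hc, hdc⟩ := exists_seq_tendsto_atTop_deriv_tendsto_zero (g := fun t ↦ g (-t))
    (hd.comp differentiable_neg) (hg.comp tendsto_neg_atTop_atBot)
  refine ⟨fun n ↦ -c n, tendsto_neg_atTop_atBot.comp hc, ?_⟩
  simpa [deriv_comp_neg] using hdc.neg

theorem Icc_subset_closure_range {g : ℝ → ℝ} {a b : ℝ} (hg : Continuous g)
    (hga : Tendsto g atBot (𝓝 a)) (hgb : Tendsto g atTop (𝓝 b)) :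
    Icc a b ⊆ closure (range g) :=
  (isPreconnected_range hg).closure.Icc_subset
    (mem_closure_of_tendsto hga (Eventually.of_forall mem_range_self))
    (mem_closure_of_tendsto hgb (Eventually.of_forall mem_range_self))

theorem double_well_structure_general
    (f F g : ℝ → ℝ)
    (hF : ∀ s, HasDerivAt F (f s) s)
    (hg : ContDiff ℝ 2 g)
    (hode : ∀ t, deriv (deriv g) t + f (g t) = 0)
    (gm gp : ℝ) (hgm : Tendsto g atBot (nhds gm)) (hgp : Tendsto g atTop (nhds gp)) :
    F gp = F gm ∧ ∀ s ∈ Set.Icc gm gp, F s ≤ F gm := by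
  have hd : Differentiable ℝ g := hg.differentiable two_ne_zero
  have hFc : Continuous F := continuous_iff_continuousAt.2 fun s ↦ (hF s).continuousAt
  have hE := energy_eq_energy_zero hF hg hode
  have hCm : energy F g 0 = F gm := by
    obtain ⟨c, hc, hdc⟩ := exists_seq_tendsto_atBot_deriv_tendsto_zero hd hgm
    exact energy_eq_of_tendsto hc hdc hgm hFc.continuousAt hE
  have hCp : energy F g 0 = F gp := by
    obtain ⟨c, hc, hdc⟩ := exists_seq_tendsto_atTop_deriv_tendsto_zero hd hgp
    exact energy_eq_of_tendsto hc hdc hgp hFc.continuousAt hE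
  have hF_le : ∀ t, F (g t) ≤ energy F g 0 := fun t ↦ hE t ▸ le_energy t
  refine ⟨hCp.symm.trans hCm, fun s hs ↦ hCm ▸ ?_⟩
  exact closure_minimal (range_subset_iff.2 hF_le) (isClosed_le hFc continuous_const)
    (Icc_subset_closure_range hd.continuous hgm hgp hs)

theorem double_well_structure
    (f F g : ℝ → ℝ) (hf : Continuous f)
    (hF : ∀ s, HasDerivAt F (f s) s)
    (hg : ContDiff ℝ 2 g)
    (hode : ∀ t, deriv (deriv g) t + f (g t) = 0)
    (hbdd : ∃ M : ℝ, ∀ t, |g t| ≤ M)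
    (hmono : StrictMono g)
    (gm gp : ℝ) (hgm : Tendsto g atBot (nhds gm)) (hgp : Tendsto g atTop (nhds gp))
    (hlt : gm < gp) :
    F gp = F gm ∧ ∀ s ∈ Set.Icc gm gp, F s ≤ F gm :=
  double_well_structure_general f F g hF hg hode gm gp hgm hgp
end

section
/- (Keller–Osserman bound in one dimension) Let p > 1, c > 0, and let v : (-D/2, D/2) → [0,∞) be a C² function satisfying v'' ≥ c v^p. Then v(0) ≤ C(p, c) D^{-2/(p-1)}, where C(p,c) depends only on p and c. -/
/-!
Since `v'' ≥ c v^p ≥ 0`, after the reflection `t ↦ -t` we may assume `v'(0) ≥ 0`, so that `v` is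
nondecreasing on `[0, D/2)`. Taylor's lower bound `v(a + δ) ≥ v(a) + c v(a)^p δ² / 2` shows that
`v` at least doubles from a level `M` within time `δ(M) ∝ M^{-(p-1)/2}`. Hence, starting from
`m = v(0)`, the level `2^k m` is reached by the time `δ(m) (1 + ρ + ⋯ + ρ^{k-1})`, where
`ρ = 2^{-(p-1)/2} < 1`. These times stay below `δ(m) / (1 - ρ)`, where `v` is finite, so
`D/2 ≤ δ(m) / (1 - ρ)`, i.e. `m^{p-1} D² ≤ C(p, c)`.
-/

open Set Finset

theorem monotoneOn_of_hasDerivAt_nonneg {s : Set ℝ} (hs : Convex ℝ s) {f f' : ℝ → ℝ}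
    (hf : ∀ x ∈ s, HasDerivAt f (f' x) x) (hf' : ∀ x ∈ s, 0 ≤ f' x) : MonotoneOn f s :=
  monotoneOn_of_hasDerivWithinAt_nonneg hs
    (fun x hx => (hf x hx).continuousAt.continuousWithinAt)
    (fun x hx => (hf x (interior_subset hx)).hasDerivWithinAt)
    (fun x hx => hf' x (interior_subset hx))

theorem add_mul_add_mul_sq_le_of_le_deriv2 {f f' f'' : ℝ → ℝ} {a x K : ℝ} (hax : a ≤ x)
    (hf : ∀ t ∈ Icc a x, HasDerivAt f (f' t) t) (hf' : ∀ t ∈ Icc a x, HasDerivAt f' (f'' t) t)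
    (hK : ∀ t ∈ Icc a x, K ≤ f'' t) :
    f a + f' a * (x - a) + K * (x - a) ^ 2 / 2 ≤ f x := by
  have hlin (t : ℝ) : HasDerivAt (fun t => K * (t - a)) K t := by
    simpa using ((hasDerivAt_id t).sub_const a).const_mul K
  have hquad (t : ℝ) : HasDerivAt (fun t => f' a * (t - a) + K / 2 * (t - a) ^ 2)
      (f' a + K * (t - a)) t := by
    have := (((hasDerivAt_id' t).sub_const a).const_mul (f' a)).fun_add
      ((((hasDerivAt_id' t).sub_const a).fun_pow 2).const_mul (K / 2))
    exact this.congr_deriv (by push_cast; ring)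
  have hf'_ge : ∀ t ∈ Icc a x, f' a + K * (t - a) ≤ f' t := by
    intro t ht
    have := monotoneOn_of_hasDerivAt_nonneg (convex_Icc a x)
      (fun t ht => (hf' t ht).fun_sub (hlin t)) (fun t ht => sub_nonneg.2 (hK t ht))
      (left_mem_Icc.2 hax) ht ht.1
    linarith
  have := monotoneOn_of_hasDerivAt_nonneg (convex_Icc a x)
    (fun t ht => (hf t ht).fun_sub (hquad t)) (fun t ht => sub_nonneg.2 (hf'_ge t ht))
    (left_mem_Icc.2 hax) (right_mem_Icc.2 hax) hax
  simp only [sub_self, mul_zero, ne_eq, OfNat.ofNat_ne_zero, not_false_eq_true, zero_pow,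
    add_zero, sub_zero] at this
  linarith

structure IsNonnegSubsolutionOn (p c : ℝ) (v v' v'' : ℝ → ℝ) (s : Set ℝ) : Prop where
  hasDerivAt : ∀ t ∈ s, HasDerivAt v (v' t) t
  hasDerivAt_deriv : ∀ t ∈ s, HasDerivAt v' (v'' t) t
  nonneg : ∀ t ∈ s, 0 ≤ v t
  mul_rpow_le : ∀ t ∈ s, c * v t ^ p ≤ v'' t

namespace IsNonnegSubsolutionOn

variable {p c b : ℝ} {v v' v'' : ℝ → ℝ} {s : Set ℝ}

theorem mono {t : Set ℝ} (h : IsNonnegSubsolutionOn p c v v' v'' s) (hts : t ⊆ s) :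
    IsNonnegSubsolutionOn p c v v' v'' t :=
  ⟨fun x hx => h.hasDerivAt x (hts hx), fun x hx => h.hasDerivAt_deriv x (hts hx),
    fun x hx => h.nonneg x (hts hx), fun x hx => h.mul_rpow_le x (hts hx)⟩

theorem comp_neg (h : IsNonnegSubsolutionOn p c v v' v'' s) :
    IsNonnegSubsolutionOn p c (fun t => v (-t)) (fun t => -v' (-t)) (fun t => v'' (-t)) (-s) where
  hasDerivAt t ht := by
    simpa [Function.comp_def] using (h.hasDerivAt (-t) ht).comp t (hasDerivAt_neg t)
  hasDerivAt_deriv t ht := by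
    have h1 : HasDerivAt (fun x => v' (-x)) (-v'' (-t)) t := by
      simpa [Function.comp_def] using (h.hasDerivAt_deriv (-t) ht).comp t (hasDerivAt_neg t)
    simpa using h1.fun_neg
  nonneg t ht := h.nonneg (-t) ht
  mul_rpow_le t ht := h.mul_rpow_le (-t) ht

theorem monotoneOn_deriv (h : IsNonnegSubsolutionOn p c v v' v'' s) (hs : Convex ℝ s)
    (hc : 0 ≤ c) : MonotoneOn v' s :=
  monotoneOn_of_hasDerivAt_nonneg hs h.hasDerivAt_deriv fun t ht =>
    (mul_nonneg hc (Real.rpow_nonneg (h.nonneg t ht) p)).trans (h.mul_rpow_le t ht)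

theorem deriv_nonneg (h : IsNonnegSubsolutionOn p c v v' v'' (Ico 0 b)) (hc : 0 ≤ c)
    (h0 : 0 ≤ v' 0) {t : ℝ} (ht : t ∈ Ico 0 b) : 0 ≤ v' t :=
  h0.trans (h.monotoneOn_deriv (convex_Ico 0 b) hc ⟨le_rfl, ht.1.trans_lt ht.2⟩ ht ht.1)

theorem monotoneOn (h : IsNonnegSubsolutionOn p c v v' v'' (Ico 0 b)) (hc : 0 ≤ c)
    (h0 : 0 ≤ v' 0) : MonotoneOn v (Ico 0 b) :=
  monotoneOn_of_hasDerivAt_nonneg (convex_Ico 0 b) h.hasDerivAt fun _ ht => h.deriv_nonneg hc h0 ht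

theorem two_mul_le (h : IsNonnegSubsolutionOn p c v v' v'' (Ico 0 b)) (hp : 0 ≤ p) (hc : 0 ≤ c)
    (h0 : 0 ≤ v' 0) {a x M : ℝ} (ha : 0 ≤ a) (hax : a ≤ x) (hxb : x < b) (hM : 0 ≤ M)
    (hMa : M ≤ v a) (hdouble : 2 * M ≤ c * M ^ p * (x - a) ^ 2) : 2 * M ≤ v x := by
  have hsub : Icc a x ⊆ Ico 0 b := fun t ht => ⟨ha.trans ht.1, ht.2.trans_lt hxb⟩
  have hmem : a ∈ Ico 0 b := hsub (left_mem_Icc.2 hax)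
  have htaylor := add_mul_add_mul_sq_le_of_le_deriv2 (K := c * M ^ p) hax
    (fun t ht => h.hasDerivAt t (hsub ht)) (fun t ht => h.hasDerivAt_deriv t (hsub ht))
    fun t ht => calc
      c * M ^ p ≤ c * v t ^ p := by
        gcongr
        exact hMa.trans (h.monotoneOn hc h0 hmem (hsub ht) ht.1)
      _ ≤ v'' t := h.mul_rpow_le t (hsub ht)
  have := mul_nonneg (h.deriv_nonneg hc h0 hmem) (sub_nonneg.2 hax)
  linarith

theorem two_pow_mul_le (h : IsNonnegSubsolutionOn p c v v' v'' (Ico 0 b)) (hp : 0 ≤ p)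
    (hc : 0 ≤ c) (h0 : 0 ≤ v' 0) {ρ δ : ℝ} (hρ0 : 0 ≤ ρ) (hρ : 2 ≤ 2 ^ p * ρ ^ 2) (hδ0 : 0 ≤ δ)
    (hδ : 2 * v 0 ≤ c * v 0 ^ p * δ ^ 2) (k : ℕ) (hk : δ * ∑ i ∈ range k, ρ ^ i < b) :
    2 ^ k * v 0 ≤ v (δ * ∑ i ∈ range k, ρ ^ i) := by
  induction k with
  | zero => simp
  | succ k ih =>
    rw [sum_range_succ, mul_add] at hk ⊢
    set t := δ * ∑ i ∈ range k, ρ ^ i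
    have hstep : 0 ≤ δ * ρ ^ k := by positivity
    have hm : 0 ≤ v 0 := h.nonneg 0 ⟨le_rfl, (by positivity : 0 ≤ t).trans_lt (by linarith)⟩
    have hdouble : 2 * (2 ^ k * v 0) ≤ c * (2 ^ k * v 0) ^ p * (t + δ * ρ ^ k - t) ^ 2 := calc
      2 * (2 ^ k * v 0) = 2 * v 0 * 2 ^ k := by ring
      _ ≤ c * v 0 ^ p * δ ^ 2 * (2 ^ p * ρ ^ 2) ^ k :=
        mul_le_mul hδ (pow_le_pow_left₀ zero_le_two hρ k) (by positivity) (by positivity)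
      _ = c * (2 ^ k * v 0) ^ p * (t + δ * ρ ^ k - t) ^ 2 := by
        rw [Real.mul_rpow (by positivity) hm, ← Real.rpow_pow_comm zero_le_two]
        ring
    rw [pow_succ, mul_comm _ 2, mul_assoc]
    exact h.two_mul_le hp hc h0 (by positivity) (by linarith) hk (by positivity)
      (ih (by linarith)) hdouble

theorem one_sub_mul_le (h : IsNonnegSubsolutionOn p c v v' v'' (Ico 0 b)) (hp : 0 ≤ p)
    (hc : 0 ≤ c) (h0 : 0 ≤ v' 0) (hm : 0 < v 0) {ρ δ : ℝ} (hρ0 : 0 ≤ ρ) (hρ1 : ρ < 1)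
    (hρ : 2 ≤ 2 ^ p * ρ ^ 2) (hδ0 : 0 ≤ δ) (hδ : 2 * v 0 ≤ c * v 0 ^ p * δ ^ 2) :
    (1 - ρ) * b ≤ δ := by
  by_contra! hlt
  set T := δ / (1 - ρ)
  have hTb : T < b := by
    rw [div_lt_iff₀ (sub_pos.2 hρ1)]
    linarith
  have hT : T ∈ Ico 0 b := ⟨by positivity, hTb⟩
  have hsum_le (k : ℕ) : δ * ∑ i ∈ range k, ρ ^ i ≤ T := by
    have := geom_sum_Ico_le_of_lt_one (m := 0) (n := k) hρ0 hρ1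
    rw [← range_eq_Ico, pow_zero] at this
    simpa only [mul_one_div] using mul_le_mul_of_nonneg_left this hδ0
  obtain ⟨k, hk⟩ := pow_unbounded_of_one_lt (v T / v 0) one_lt_two
  have := h.two_pow_mul_le hp hc h0 hρ0 hρ hδ0 hδ k ((hsum_le k).trans_lt hTb)
  have hmono := h.monotoneOn hc h0 ⟨by positivity, (hsum_le k).trans_lt hTb⟩ hT (hsum_le k)
  rw [div_lt_iff₀ hm] at hk
  linarith

theorem rpow_mul_sq_le_of_deriv_nonneg (h : IsNonnegSubsolutionOn p c v v' v'' (Ico 0 b))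
    (hb : 0 < b) (hp : 1 < p) (hc : 0 < c) (h0 : 0 ≤ v' 0) {ρ : ℝ} (hρ0 : 0 ≤ ρ) (hρ1 : ρ < 1)
    (hρ : 2 ≤ 2 ^ p * ρ ^ 2) : v 0 ^ (p - 1) * b ^ 2 ≤ 2 / (c * (1 - ρ) ^ 2) := by
  rcases (h.nonneg 0 ⟨le_rfl, hb⟩).eq_or_lt with hm | hm
  · rw [← hm, Real.zero_rpow (by linarith), zero_mul]
    positivity
  set m := v 0
  have hmp : 0 < m ^ (p - 1) := Real.rpow_pos_of_pos hm _
  set δ := √(2 / (c * m ^ (p - 1)))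
  have hδsq : δ ^ 2 = 2 / (c * m ^ (p - 1)) := Real.sq_sqrt (by positivity)
  have hδ : c * m ^ p * δ ^ 2 = 2 * m := by
    rw [hδsq, Real.rpow_sub_one hm.ne']
    field_simp
  have hb' := h.one_sub_mul_le (by linarith) hc.le h0 hm hρ0 hρ1 hρ (Real.sqrt_nonneg _) hδ.ge
  have hsq := pow_le_pow_left₀ (by positivity) hb' 2
  rw [hδsq, le_div_iff₀ (by positivity)] at hsq
  rw [le_div_iff₀ (by positivity)]
  linarith

theorem rpow_mul_sq_le (h : IsNonnegSubsolutionOn p c v v' v'' (Ioo (-b) b))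
    (hb : 0 < b) (hp : 1 < p) (hc : 0 < c) {ρ : ℝ} (hρ0 : 0 ≤ ρ) (hρ1 : ρ < 1)
    (hρ : 2 ≤ 2 ^ p * ρ ^ 2) : v 0 ^ (p - 1) * b ^ 2 ≤ 2 / (c * (1 - ρ) ^ 2) := by
  have hIco : Ico 0 b ⊆ Ioo (-b) b := fun t ht => ⟨by linarith [ht.1], ht.2⟩
  rcases le_total 0 (v' 0) with h0 | h0
  · exact (h.mono hIco).rpow_mul_sq_le_of_deriv_nonneg hb hp hc h0 hρ0 hρ1 hρ
  · have hneg := h.comp_neg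
    rw [neg_Ioo, neg_neg] at hneg
    simpa using (hneg.mono hIco).rpow_mul_sq_le_of_deriv_nonneg hb hp hc (by simpa using h0)
      hρ0 hρ1 hρ

end IsNonnegSubsolutionOn

theorem exists_lt_one_two_le_two_rpow_mul_sq {p : ℝ} (hp : 1 < p) :
    ∃ ρ : ℝ, 0 ≤ ρ ∧ ρ < 1 ∧ 2 ≤ 2 ^ p * ρ ^ 2 := by
  refine ⟨2 ^ ((1 - p) / 2), by positivity,
    Real.rpow_lt_one_of_one_lt_of_neg one_lt_two (by linarith), le_of_eq ?_⟩
  rw [← Real.rpow_mul_natCast zero_le_two, ← Real.rpow_add two_pos]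
  norm_num

theorem le_rpow_inv_mul_rpow_neg {m D K q : ℝ} (hm : 0 ≤ m) (hD : 0 < D) (hq : 0 < q)
    (h : m ^ q * D ^ 2 ≤ K) : m ≤ K ^ q⁻¹ * D ^ (-(2 / q)) := by
  have hK : 0 ≤ K := (by positivity : 0 ≤ m ^ q * D ^ 2).trans h
  have hDq : (D ^ (-(2 / q))) ^ q = (D ^ 2)⁻¹ := by
    rw [← Real.rpow_mul hD.le, neg_mul, div_mul_cancel₀ _ hq.ne', Real.rpow_neg hD.le]
    norm_cast
  rw [← Real.rpow_rpow_inv (by positivity : 0 ≤ D ^ (-(2 / q))) hq.ne', ← Real.mul_rpow hK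
    (by positivity), Real.le_rpow_inv_iff_of_pos hm (by positivity) hq, hDq,
    ← div_eq_mul_inv, le_div_iff₀ (by positivity)]
  exact h

theorem keller_osserman_1d (p c : ℝ) (hp : 1 < p) (hc : 0 < c) :
    ∃ C : ℝ, 0 < C ∧ ∀ D : ℝ, 0 < D → ∀ v v' v'' : ℝ → ℝ,
      (∀ t ∈ Set.Ioo (-(D / 2)) (D / 2), HasDerivAt v (v' t) t) →
      (∀ t ∈ Set.Ioo (-(D / 2)) (D / 2), HasDerivAt v' (v'' t) t) →
      ContinuousOn v'' (Set.Ioo (-(D / 2)) (D / 2)) →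
      (∀ t ∈ Set.Ioo (-(D / 2)) (D / 2), 0 ≤ v t) →
      (∀ t ∈ Set.Ioo (-(D / 2)) (D / 2), c * v t ^ p ≤ v'' t) →
      v 0 ≤ C * D ^ (-(2 / (p - 1))) := by
  obtain ⟨ρ, hρ0, hρ1, hρ⟩ := exists_lt_one_two_le_two_rpow_mul_sq hp
  refine ⟨(4 * (2 / (c * (1 - ρ) ^ 2))) ^ (p - 1)⁻¹, by positivity, ?_⟩
  intro D hD v v' v'' hv hv' _ hnn hode
  have hbound := (IsNonnegSubsolutionOn.mk hv hv' hnn hode).rpow_mul_sq_le (half_pos hD) hp hc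
    hρ0 hρ1 hρ
  exact le_rpow_inv_mul_rpow_neg (hnn 0 ⟨by linarith, by linarith⟩) hD (sub_pos.2 hp)
    (by linarith)
end
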